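/- arXiv:math/0105145 — 2 statements merged into one kernel-verified Lean document; each statement's English description precedes it below -/
import Mathlib

section
/- Let H be a finite index set, D, G complex matrices of size |H| with det D ≠ 0, and let (Q_i(w))_{i∈H} be the unique solution of the Q-system ∏_{j∈H} Q_j(w)^{D_{ij}} + w_i ∏_{j∈H} Q_j(w)^{G_{ij}} = 1. For ν ∈ ℂ^H set Q^ν_{D,G}(w) = ∏_{i∈H} (Q_i(w))^{ν_i}. Then Q^ν_{D,G}(w) = R^ν_{D,G}(w) as formal power series. -/
noncomputable def binomC (a : ℂ) (b : ℕ) : ℂ :=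
  (∏ j ∈ Finset.range b, (a - (j : ℂ))) / (Nat.factorial b : ℂ)

noncomputable def cpow {σ : Type*} (f : MvPowerSeries σ ℂ) (α : ℂ) : MvPowerSeries σ ℂ :=
  fun N => ∑ k ∈ Finset.range (N.sum (fun _ e => e) + 1),
    binomC α k * MvPowerSeries.coeff N ((f - 1) ^ k)

/-- `P_i(D,G;ν,N) = -Σ_j ν_j (D⁻¹)_{ji} - Σ_j N_j (G D⁻¹)_{ji}`. -/
noncomputable def Pfin {H : Type*} [Fintype H] [DecidableEq H]
    (D G : Matrix H H ℂ) (ν : H → ℂ) (N : H →₀ ℕ) (i : H) : ℂ :=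
  -(∑ j, ν j * D⁻¹ j i) - ∑ j, (N j : ℂ) * (G * D⁻¹) j i

/-- The power series `K^ν_{D,G}(w) = Σ_N (∏_{i∈H(N)} binom(P_i+N_i, N_i)) w^N`. -/
noncomputable def Kfin {H : Type*} [Fintype H] [DecidableEq H]
    (D G : Matrix H H ℂ) (ν : H → ℂ) : MvPowerSeries H ℂ :=
  fun N => ∏ i ∈ N.support, binomC (Pfin D G ν N i + (N i : ℂ)) (N i)

/-- `F_{ij}(D,G;ν,N) = δ_{ij} P_j + (G D⁻¹)_{ij} N_j`. -/
noncomputable def Ffin {H : Type*} [Fintype H] [DecidableEq H]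
    (D G : Matrix H H ℂ) (ν : H → ℂ) (N : H →₀ ℕ) (i j : H) : ℂ :=
  (if i = j then Pfin D G ν N j else 0) + (G * D⁻¹) i j * (N j : ℂ)

/-- The power series
`R^ν_{D,G}(w) = Σ_N (det_{H(N)} F) (∏_{i∈H(N)} (1/N_i) binom(P_i+N_i-1, N_i-1)) w^N`. -/
noncomputable def Rfin {H : Type*} [Fintype H] [DecidableEq H]
    (D G : Matrix H H ℂ) (ν : H → ℂ) : MvPowerSeries H ℂ :=
  fun N =>
    (Matrix.det (Matrix.of fun i j : N.support => Ffin D G ν N i j)) *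
      ∏ i ∈ N.support, (1 / (N i : ℂ)) * binomC (Pfin D G ν N i + (N i : ℂ) - 1) (N i - 1)

/-!
Write `T ν` for either side as a function of `ν`. Both sides satisfy the shift recurrence
`T (ν + D_i) = T ν - w_i T (ν + G_i)` with `T 0 = 1`: for `∏ Q_j ^ ν_j` this is the `Q`-system
multiplied by `∏ Q_j ^ ν_j`; for `R` the shift by `D_i` lowers `P_i` by one, the shift by `G_i`
together with `N ↦ N - e_i` leaves `P` unchanged, and the determinant is affine in the `i`-th
column, so the recurrence reduces to Pascal's rule and absorption for the binomial factors.
The `N`-th coefficients of both sides are polynomial in `ν`, so by induction on `|N|` their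
difference is a polynomial invariant under translation by the rows of `D`. These rows span
`ℂ^H`, hence the difference is constant, and it vanishes at `ν = 0`.
-/

open MvPowerSeries Matrix Finsupp

theorem binomC_eq_choose (a : ℂ) (b : ℕ) : binomC a b = Ring.choose a b := by
  rw [Ring.choose_eq_smul, binomC, ← Polynomial.aeval_eq_smeval, Polynomial.aeval_def,
    Polynomial.eval₂_eq_eval_map, descPochhammer_map, descPochhammer_eval_eq_prod_range,
    smul_eq_mul, div_eq_inv_mul]

theorem binomC_succ (a : ℂ) (b : ℕ) : binomC a (b + 1) = binomC a b * (a - b) / (b + 1) := by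
  simp only [binomC, Finset.prod_range_succ, Nat.factorial_succ]
  push_cast
  field_simp

theorem binomC_succ_succ (a : ℂ) (b : ℕ) :
    binomC (a + 1) (b + 1) = binomC a b + binomC a (b + 1) := by
  simp only [binomC_eq_choose, Ring.choose_succ_succ]

theorem coeff_pow_eq_zero_of_degree_lt {σ R : Type*} [CommRing R] {g : MvPowerSeries σ R}
    (hg : constantCoeff g = 0) {N : σ →₀ ℕ} {k : ℕ} (h : degree N < k) :
    coeff N (g ^ k) = 0 :=
  coeff_of_lt_order ((Nat.cast_lt.2 h).trans_le (le_order_pow_of_constantCoeff_eq_zero k hg))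

theorem coeff_mul_eq_of_degree_lt {σ R : Type*} [CommRing R] {φ f g : MvPowerSeries σ R}
    (hφ : constantCoeff φ = 0) {N : σ →₀ ℕ}
    (h : ∀ M, degree M < degree N → coeff M f = coeff M g) :
    coeff N (φ * f) = coeff N (φ * g) := by
  classical
  rw [coeff_mul, coeff_mul]
  refine Finset.sum_congr rfl fun ab hab => ?_
  rcases eq_or_ne ab.1 0 with ha | ha
  · simp [ha, hφ]
  · rw [Finset.HasAntidiagonal.mem_antidiagonal] at hab
    have := (degree_eq_zero_iff ab.1).not.2 ha
    rw [h ab.2 (by rw [← hab, map_add]; omega)]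

theorem coeff_X_mul_eq_ite {σ R : Type*} [CommRing R] [DecidableEq σ] (f : MvPowerSeries σ R)
    (i : σ) (N : σ →₀ ℕ) :
    coeff N (X i * f) = if N i = 0 then 0 else coeff (N - Finsupp.single i 1) f := by
  rw [X, coeff_monomial_mul, one_mul]
  simp [Finsupp.single_le_iff, Nat.one_le_iff_ne_zero, ite_not]

section cpow

variable {σ : Type*} {f : MvPowerSeries σ ℂ}

theorem coeff_cpow (α : ℂ) (N : σ →₀ ℕ) :
    coeff N (cpow f α) = ∑ k ∈ Finset.range (degree N + 1), binomC α k * coeff N ((f - 1) ^ k) :=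
  rfl

theorem hasSubst_sub_one (hf : constantCoeff f = 1) : PowerSeries.HasSubst (f - 1) :=
  PowerSeries.HasSubst.of_constantCoeff_zero (by simp [hf])

theorem cpow_eq_subst (hf : constantCoeff f = 1) (α : ℂ) :
    cpow f α = PowerSeries.subst (f - 1) (PowerSeries.binomialSeries ℂ α) := by
  ext N
  rw [PowerSeries.coeff_subst (hasSubst_sub_one hf),
    finsum_eq_sum_of_support_subset (s := Finset.range (degree N + 1))]
  · simp [coeff_cpow, binomC_eq_choose]
  · intro k hk
    by_contra hkN
    exact hk (by
      simp [coeff_pow_eq_zero_of_degree_lt (g := f - 1) (by simp [hf]) (by simpa using hkN)])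

theorem cpow_add (hf : constantCoeff f = 1) (α β : ℂ) :
    cpow f (α + β) = cpow f α * cpow f β := by
  simp only [cpow_eq_subst hf, PowerSeries.binomialSeries_add,
    PowerSeries.subst_mul (hasSubst_sub_one hf)]

theorem cpow_zero (hf : constantCoeff f = 1) : cpow f 0 = 1 := by
  rw [cpow_eq_subst hf, PowerSeries.binomialSeries_zero,
    ← PowerSeries.coe_substAlgHom (hasSubst_sub_one hf), map_one]

end cpow

theorem prod_cpow_add {H : Type*} [Fintype H] {Q : H → MvPowerSeries H ℂ}
    (hQ : ∀ i, constantCoeff (Q i) = 1) (μ ν : H → ℂ) :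
    ∏ j, cpow (Q j) ((μ + ν) j) = (∏ j, cpow (Q j) (μ j)) * ∏ j, cpow (Q j) (ν j) := by
  rw [← Finset.prod_mul_distrib]
  exact Finset.prod_congr rfl fun j _ => cpow_add (hQ j) _ _

theorem Polynomial.eq_C_of_eval_add_one {K : Type*} [CommRing K] [IsDomain K] [CharZero K]
    {q : Polynomial K} (hq : ∀ t, q.eval (t + 1) = q.eval t) : q = Polynomial.C (q.eval 0) := by
  have hnat : ∀ n : ℕ, q.eval (n : K) = q.eval 0 := by
    intro n
    induction n with
    | zero => simp
    | succ n ih => rw [Nat.cast_succ, hq, ih]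
  apply Polynomial.eq_of_infinite_eval_eq
  refine Set.Infinite.mono (s := Set.range (Nat.cast : ℕ → K)) ?_
    (Set.infinite_range_of_injective Nat.cast_injective)
  rintro _ ⟨n, rfl⟩
  simp [hnat n]

section PolyFun

variable (R ι : Type*) [CommRing R]

noncomputable def polyFun : Subalgebra R ((ι → R) → R) :=
  (AlgHom.pi fun x : ι → R => MvPolynomial.aeval x : MvPolynomial ι R →ₐ[R] (ι → R) → R).range

variable {R ι}

theorem mem_polyFun {f : (ι → R) → R} :
    f ∈ polyFun R ι ↔ ∃ p : MvPolynomial ι R, ∀ x, MvPolynomial.eval x p = f x := by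
  simp [polyFun, funext_iff]

theorem coord_mem_polyFun (i : ι) : (fun x : ι → R => x i) ∈ polyFun R ι :=
  mem_polyFun.2 ⟨MvPolynomial.X i, fun _ => MvPolynomial.eval_X ..⟩

theorem const_mem_polyFun (c : R) : (fun _ : ι → R => c) ∈ polyFun R ι :=
  (polyFun R ι).algebraMap_mem c

theorem det_mem_polyFun {n : Type*} [Fintype n] [DecidableEq n] {M : (ι → R) → Matrix n n R}
    (hM : ∀ a b, (fun x => M x a b) ∈ polyFun R ι) : (fun x => (M x).det) ∈ polyFun R ι := by
  have hdet : (fun x => (M x).det) =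
      ∑ τ : Equiv.Perm n, Equiv.Perm.sign τ • ∏ a, fun x => M x (τ a) a := by
    ext x
    simp [det_apply, Finset.sum_apply, Finset.prod_apply]
  rw [hdet]
  exact Subalgebra.sum_mem _ fun τ _ =>
    Subalgebra.zsmul_mem _ (Subalgebra.prod_mem _ fun a _ => hM _ _) _

theorem exists_polynomial_eval_line {f : (ι → R) → R} (hf : f ∈ polyFun R ι) (x v : ι → R) :
    ∃ q : Polynomial R, ∀ t : R, f (x + t • v) = q.eval t := by
  obtain ⟨p, hp⟩ := mem_polyFun.1 hf
  refine ⟨MvPolynomial.aeval (fun i => Polynomial.C (x i) + Polynomial.C (v i) * Polynomial.X) p,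
    fun t => ?_⟩
  have hline : x + t • v = fun i => Polynomial.aeval t (.C (x i) + .C (v i) * .X) := by
    ext i
    simp only [Pi.add_apply, Pi.smul_apply, smul_eq_mul, Polynomial.coe_aeval_eq_eval,
      Polynomial.eval_add, Polynomial.eval_C, Polynomial.eval_mul, Polynomial.eval_X]
    ring
  rw [← hp, ← Polynomial.coe_aeval_eq_eval, ← AlgHom.comp_apply, MvPolynomial.comp_aeval,
    MvPolynomial.aeval_eq_eval, hline]

variable [IsDomain R] [CharZero R]

theorem polyFun.add_smul_eq_of_add_eq {f : (ι → R) → R} (hf : f ∈ polyFun R ι) {v : ι → R}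
    (hv : ∀ y, f (y + v) = f y) (y : ι → R) (t : R) : f (y + t • v) = f y := by
  obtain ⟨q, hq⟩ := exists_polynomial_eval_line hf y v
  have hper : ∀ s, q.eval (s + 1) = q.eval s := fun s => by
    rw [← hq, ← hq, add_smul, one_smul, ← add_assoc, hv]
  rw [hq, Polynomial.eq_C_of_eval_add_one hper, Polynomial.eval_C, ← hq, zero_smul, add_zero]

theorem polyFun.eq_of_add_eq {f : (ι → R) → R} (hf : f ∈ polyFun R ι) {s : Set (ι → R)}
    (hs : Submodule.span R s = ⊤) (hper : ∀ v ∈ s, ∀ y, f (y + v) = f y) (x y : ι → R) :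
    f x = f y := by
  suffices h : ∀ v ∈ Submodule.span R s, ∀ y, f (y + v) = f y by
    simpa using h (x - y) (hs ▸ Submodule.mem_top) y
  intro v hv
  induction hv using Submodule.span_induction with
  | mem v hv => exact hper v hv
  | zero => simp
  | add v w _ _ hv hw => exact fun y => by rw [← add_assoc, hw, hv]
  | smul t v _ hv => exact fun y => polyFun.add_smul_eq_of_add_eq hf hv y t

end PolyFun

theorem binomC_mem_polyFun {ι : Type*} {f : (ι → ℂ) → ℂ} (hf : f ∈ polyFun ℂ ι) (k : ℕ) :
    (fun x => binomC (f x) k) ∈ polyFun ℂ ι := by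
  have hbinom : (fun x => binomC (f x) k) =
      (fun _ => ((k.factorial : ℂ))⁻¹) * ∏ j ∈ Finset.range k, (f - fun _ => (j : ℂ)) := by
    ext x
    simp [binomC, Finset.prod_apply, div_eq_inv_mul]
  rw [hbinom]
  exact Subalgebra.mul_mem _ (const_mem_polyFun _)
    (Subalgebra.prod_mem _ fun j _ => Subalgebra.sub_mem _ hf (const_mem_polyFun _))

section PolyCoeffFamily

variable (R ι σ : Type*) [CommRing R]

noncomputable def polyCoeffFamily : Subalgebra R ((ι → R) → MvPowerSeries σ R) where
  carrier := {F | ∀ N, (fun x => coeff N (F x)) ∈ polyFun R ι}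
  mul_mem' {F G} hF hG N := by
    classical
    have hcoeff : (fun x => coeff N ((F * G) x)) = ∑ p ∈ Finset.HasAntidiagonal.antidiagonal N,
        (fun x => coeff p.1 (F x)) * fun x => coeff p.2 (G x) := by
      ext x
      simp [coeff_mul, Finset.sum_apply]
    rw [hcoeff]
    exact Subalgebra.sum_mem _ fun p _ => Subalgebra.mul_mem _ (hF _) (hG _)
  add_mem' hF hG N := Subalgebra.add_mem _ (hF N) (hG N)
  algebraMap_mem' r N := by
    classical
    simpa [MvPowerSeries.algebraMap_apply, coeff_C] using
      const_mem_polyFun (ι := ι) (if N = 0 then r else 0)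

theorem cpow_mem_polyCoeffFamily {σ ι : Type*} (f : MvPowerSeries σ ℂ) (j : ι) :
    (fun x : ι → ℂ => cpow f (x j)) ∈ polyCoeffFamily ℂ ι σ := fun N => by
  have hcoeff : (fun x : ι → ℂ => coeff N (cpow f (x j))) = ∑ k ∈ Finset.range (degree N + 1),
      (fun x => binomC (x j) k) * fun _ => coeff N ((f - 1) ^ k) := by
    ext x
    simp [coeff_cpow, Finset.sum_apply]
  rw [hcoeff]
  exact Subalgebra.sum_mem _ fun k _ =>
    Subalgebra.mul_mem _ (binomC_mem_polyFun (coord_mem_polyFun j) k) (const_mem_polyFun _)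

theorem Matrix.span_rows_eq_top {K ι : Type*} [Field K] [Fintype ι] [DecidableEq ι]
    {D : Matrix ι ι K} (hD : IsUnit D) : Submodule.span K (Set.range D.row) = ⊤ := by
  rw [← range_vecMulLinear, LinearMap.range_eq_top]
  exact vecMul_surjective_iff_isUnit.2 hD

theorem eq_of_shift_recurrence {K ι : Type*} [Field K] [CharZero K] [Fintype ι] [DecidableEq ι]
    {D G : Matrix ι ι K} (hD : IsUnit D) {T U : (ι → K) → MvPowerSeries ι K}
    (hT : T ∈ polyCoeffFamily K ι ι) (hU : U ∈ polyCoeffFamily K ι ι) (h0 : T 0 = U 0)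
    (hTrec : ∀ x i, T (x + D i) = T x - X i * T (x + G i))
    (hUrec : ∀ x i, U (x + D i) = U x - X i * U (x + G i)) : T = U := by
  suffices h : ∀ n, ∀ N : ι →₀ ℕ, degree N = n → ∀ x, coeff N (T x) = coeff N (U x) from
    funext fun x => ext fun N => h _ N rfl x
  intro n
  induction n using Nat.strong_induction_on with | _ n ih => ?_
  intro N hN x
  have hdiff : (fun x => coeff N (T x) - coeff N (U x)) ∈ polyFun K ι :=
    Subalgebra.sub_mem _ (hT N) (hU N)
  have hper : ∀ v ∈ Set.range D.row, ∀ y,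
      coeff N (T (y + v)) - coeff N (U (y + v)) = coeff N (T y) - coeff N (U y) := by
    rintro _ ⟨i, rfl⟩ y
    -- the `X i`-terms only involve coefficients of lower degree, which agree by induction
    rw [Matrix.row, hTrec, hUrec, map_sub, map_sub, coeff_mul_eq_of_degree_lt (constantCoeff_X i)
      fun M hM => ih _ (hN ▸ hM) M rfl _]
    ring
  have := polyFun.eq_of_add_eq hdiff (Matrix.span_rows_eq_top hD) hper x 0
  rwa [h0, sub_self, sub_eq_zero] at this

end PolyCoeffFamily

namespace Matrix

variable {R n : Type*} [CommRing R]

theorem det_updateCol_single_one [Fintype n] [DecidableEq n] (M : Matrix n n R) (i : n) :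
    (M.updateCol i (Pi.single i 1)).det = (M.submatrix ((↑) : {a // a ≠ i} → n) (↑)).det := by
  let e := Equiv.sumCompl (· ≠ i)
  have hblocks : (M.updateCol i (Pi.single i 1)).submatrix e e =
      fromBlocks (M.submatrix (↑) (↑)) 0 (M.submatrix (↑) (↑)) 1 := by
    ext (a | a) (b | b)
    · simp [e, b.2]
    · simp [e, of_not_not b.2, a.2]
    · simp [e, b.2]
    · have hab : a = b := Subtype.ext ((of_not_not a.2).trans (of_not_not b.2).symm)
      simp [e, of_not_not b.2, hab]
  rw [← det_submatrix_equiv_self e, hblocks, det_fromBlocks_zero₁₂, det_one, mul_one]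

noncomputable def principalMinor [DecidableEq n] (A : Matrix n n R) (S : Finset n) : R :=
  (A.submatrix ((↑) : S → n) (↑)).det

variable {A B : Matrix n n R} {S : Finset n}

theorem principalMinor_congr [DecidableEq n] (h : ∀ a ∈ S, ∀ b ∈ S, A a b = B a b) :
    A.principalMinor S = B.principalMinor S := by
  unfold principalMinor
  congr 1 with a b
  exact h a a.2 b b.2

theorem det_submatrix_updateCol_single_one [DecidableEq n] {i : n} (hi : i ∈ S) :
    ((A.submatrix ((↑) : S → n) (↑)).updateCol ⟨i, hi⟩ (Pi.single ⟨i, hi⟩ 1)).det =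
      A.principalMinor (S.erase i) := by
  let e : S.erase i ≃ {a : S // a ≠ ⟨i, hi⟩} :=
    { toFun a := ⟨⟨a, Finset.mem_of_mem_erase a.2⟩,
        fun h => Finset.ne_of_mem_erase a.2 (congrArg Subtype.val h)⟩
      invFun a := ⟨a.1, Finset.mem_erase.2 ⟨fun h => a.2 (Subtype.ext h), a.1.2⟩⟩ }
  rw [det_updateCol_single_one, ← det_submatrix_equiv_self e]
  rfl

theorem exists_principalMinor_diagonal_add_mul_diagonal_update [Fintype n] [DecidableEq n]
    (C : Matrix n n R) (p q : n → R) {S : Finset n} {i : n} (hi : i ∈ S) :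
    ∃ K, ∀ s t, (diagonal (Function.update p i s) +
        C * diagonal (Function.update q i t)).principalMinor S =
      s * (diagonal p + C * diagonal q).principalMinor (S.erase i) + t * K := by
  set M := (diagonal p + C * diagonal q).submatrix ((↑) : S → n) ((↑) : S → n)
  set i' : S := ⟨i, hi⟩
  refine ⟨(M.updateCol i' fun a => C a i).det, fun s t => ?_⟩
  have hcol : (diagonal (Function.update p i s) + C * diagonal (Function.update q i t)).submatrix
      ((↑) : S → n) ((↑) : S → n) =
        M.updateCol i' (s • Pi.single i' 1 + t • fun a : S => C a i) := by
    ext a b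
    have hsub : ∀ c : S, (c : n) = i ↔ c = i' := fun c => by simp [i', Subtype.ext_iff]
    rcases eq_or_ne b i' with rfl | hb
    · by_cases ha : a = i' <;> simp [M, i', hsub, ha, mul_comm]
    · have hb' : (b : n) ≠ i := fun h => hb (Subtype.ext h)
      by_cases ha : a = b <;> simp [M, hb, hb', ha]
  rw [principalMinor.eq_def, hcol, det_updateCol_add, det_updateCol_smul, det_updateCol_smul,
    det_submatrix_updateCol_single_one]

theorem principalMinor_diagonal_add_mul_diagonal_congr [Fintype n] [DecidableEq n]
    (C : Matrix n n R) {p p' q q' : n → R} {S : Finset n} (hp : ∀ b ∈ S, p b = p' b)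
    (hq : ∀ b ∈ S, q b = q' b) :
    (diagonal p + C * diagonal q).principalMinor S =
      (diagonal p' + C * diagonal q').principalMinor S :=
  principalMinor_congr fun a _ b hb => by
    rcases eq_or_ne a b with rfl | hab
    · simp [hp a hb, hq a hb]
    · simp [hab, hq b hb]

end Matrix

theorem Matrix.principalMinor_diagonal_neg_vecMul_add_mul_diagonal_eq_zero {K n : Type*} [Field K]
    [Fintype n] [DecidableEq n] (C : Matrix n n K) {q : n → K} {S : Finset n}
    (hq : ∀ a ∉ S, q a = 0) (hne : ∃ a ∈ S, q a ≠ 0) :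
    (diagonal (-(q ᵥ* C)) + C * diagonal q).principalMinor S = 0 := by
  refine exists_vecMul_eq_zero_iff.1 ⟨fun a : S => q a, ?_, ?_⟩
  · obtain ⟨a, ha, hqa⟩ := hne
    exact fun h => hqa (congrFun h ⟨a, ha⟩)
  · ext b
    have hsum : ∑ a : S, q a * C a b = (q ᵥ* C) b := by
      rw [Finset.sum_coe_sort S fun a => q a * C a b]
      exact Finset.sum_subset (Finset.subset_univ S) fun a _ ha => by simp [hq a ha]
    simp only [vecMul, dotProduct, submatrix_apply, Matrix.add_apply, mul_diagonal,
      diagonal_apply, mul_add, Finset.sum_add_distrib, Pi.zero_apply, Subtype.coe_inj, mul_ite,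
      mul_zero, Finset.sum_ite_eq', Finset.mem_univ, if_true, ← mul_assoc, ← Finset.sum_mul, hsum,
      Pi.neg_apply]
    ring

theorem sub_single_one_apply_of_ne {H : Type*} [DecidableEq H] {N : H →₀ ℕ} {i j : H}
    (hj : j ≠ i) : (N - Finsupp.single i 1 : H →₀ ℕ) j = N j := by
  simp [hj]

theorem natCast_sub_single {H : Type*} [DecidableEq H] {N : H →₀ ℕ} {i : H} (hN : N i ≠ 0) :
    (fun j => ((N - Finsupp.single i 1 : H →₀ ℕ) j : ℂ)) =
      (fun j => (N j : ℂ)) - Pi.single i 1 := by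
  ext j
  rcases eq_or_ne j i with rfl | hj
  · simp [Nat.cast_sub (Nat.one_le_iff_ne_zero.2 hN)]
  · simp [hj]

noncomputable def rfactor (m : ℕ) (x : ℂ) : ℂ :=
  1 / m * binomC (x + m - 1) (m - 1)

theorem rfactor_one (x : ℂ) : rfactor 1 x = 1 := by
  simp [rfactor, binomC]

theorem rfactor_recurrence (l : ℕ) (x d K : ℂ) :
    ((x - 1) * d + (l + 2 : ℕ) * K) * rfactor (l + 2) (x - 1) =
      (x * d + (l + 2 : ℕ) * K) * rfactor (l + 2) x -
        (x * d + (l + 1 : ℕ) * K) * rfactor (l + 1) x := by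
  have h1 : (l : ℂ) + 1 ≠ 0 := by exact_mod_cast (l + 1).succ_ne_zero
  have h2 : (l : ℂ) + 2 ≠ 0 := by exact_mod_cast (l + 2).succ_ne_zero
  simp only [rfactor, Nat.add_sub_cancel]
  push_cast
  rw [show x - 1 + (l + 2) - 1 = x + l by ring, show x + (l + 2) - 1 = x + l + 1 by ring,
    show x + (l + 1) - 1 = x + l by ring, binomC_succ_succ, binomC_succ]
  field_simp
  ring

theorem rfactor_mem_polyFun {ι : Type*} {f : (ι → ℂ) → ℂ} (hf : f ∈ polyFun ℂ ι) (m : ℕ) :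
    (fun x => rfactor m (f x)) ∈ polyFun ℂ ι :=
  Subalgebra.mul_mem _ (const_mem_polyFun _) (binomC_mem_polyFun
    (Subalgebra.sub_mem _ (Subalgebra.add_mem _ hf (const_mem_polyFun _)) (const_mem_polyFun _)) _)

section rCoeff

variable {H : Type*} [Fintype H] [DecidableEq H]

-- The `N`-th coefficient of `R`, with `C = G D⁻¹` and `P = P(ν, N)` treated as independent data.
noncomputable def rCoeff (C : Matrix H H ℂ) (P : H → ℂ) (N : H →₀ ℕ) : ℂ :=
  (diagonal P + C * diagonal fun j => (N j : ℂ)).principalMinor N.support *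
    ∏ j ∈ N.support, rfactor (N j) (P j)

theorem rCoeff_congr (C : Matrix H H ℂ) {P P' : H → ℂ} {N : H →₀ ℕ}
    (h : ∀ j ∈ N.support, P j = P' j) : rCoeff C P N = rCoeff C P' N := by
  rw [rCoeff, rCoeff, principalMinor_diagonal_add_mul_diagonal_congr _ h fun _ _ => rfl,
    Finset.prod_congr rfl fun j hj => by rw [h j hj]]

theorem rCoeff_update (C : Matrix H H ℂ) (P : H → ℂ) {N : H →₀ ℕ} {i : H} (hi : i ∈ N.support)
    (s : ℂ) :
    rCoeff C (Function.update P i s) N =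
      (diagonal (Function.update P i s) + C * diagonal fun j => (N j : ℂ)).principalMinor
        N.support * (rfactor (N i) s * ∏ j ∈ N.support.erase i, rfactor (N j) (P j)) := by
  rw [rCoeff, ← Finset.mul_prod_erase _ _ hi, Function.update_self]
  congr 2
  exact Finset.prod_congr rfl fun j hj => by rw [Function.update_of_ne (Finset.ne_of_mem_erase hj)]

theorem rCoeff_sub_single_of_eq_one (C : Matrix H H ℂ) (P : H → ℂ) {N : H →₀ ℕ} {i : H}
    (hN : N i = 1) :
    rCoeff C P (N - Finsupp.single i 1) =
      (diagonal P + C * diagonal fun j => (N j : ℂ)).principalMinor (N.support.erase i) *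
        ∏ j ∈ N.support.erase i, rfactor (N j) (P j) := by
  have hsupp : (N - Finsupp.single i 1).support = N.support.erase i := by
    ext j
    rcases eq_or_ne j i with rfl | hj
    · simp [hN]
    · simp [hj]
  rw [rCoeff, hsupp, principalMinor_diagonal_add_mul_diagonal_congr _ (fun _ _ => rfl)
    fun j hj => by rw [sub_single_one_apply_of_ne (Finset.ne_of_mem_erase hj)]]
  congr 1
  exact Finset.prod_congr rfl fun j hj => by
    rw [sub_single_one_apply_of_ne (Finset.ne_of_mem_erase hj)]

theorem rCoeff_sub_single_of_eq_add_two (C : Matrix H H ℂ) (P : H → ℂ) {N : H →₀ ℕ} {i : H}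
    {l : ℕ} (hN : N i = l + 2) :
    rCoeff C P (N - Finsupp.single i 1) =
      principalMinor
          (diagonal P + C * diagonal (Function.update (fun j => (N j : ℂ)) i (l + 1 : ℕ)))
          N.support * (rfactor (l + 1) (P i) * ∏ j ∈ N.support.erase i, rfactor (N j) (P j)) := by
  have hi : i ∈ N.support := by simp [hN]
  have hNi : (N - Finsupp.single i 1 : H →₀ ℕ) i = l + 1 := by simp [hN]
  have hsupp : (N - Finsupp.single i 1).support = N.support := by
    ext j
    rcases eq_or_ne j i with rfl | hj
    · simp [hN]
    · simp [hj]
  rw [rCoeff, hsupp, ← Finset.mul_prod_erase _ _ hi, hNi]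
  congr 1
  · refine principalMinor_diagonal_add_mul_diagonal_congr _ (fun _ _ => rfl) fun j _ => ?_
    rcases eq_or_ne j i with rfl | hj
    · simp [hNi]
    · simp [hj]
  · congr 1
    exact Finset.prod_congr rfl fun j hj => by
      rw [sub_single_one_apply_of_ne (Finset.ne_of_mem_erase hj)]

theorem rCoeff_sub_single_one (C : Matrix H H ℂ) (P : H → ℂ) {N : H →₀ ℕ} {i : H}
    (hN : N i ≠ 0) :
    rCoeff C (P - Pi.single i 1) N = rCoeff C P N - rCoeff C P (N - Finsupp.single i 1) := by
  have hi : i ∈ N.support := Finsupp.mem_support_iff.2 hN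
  obtain ⟨K, hK⟩ :=
    exists_principalMinor_diagonal_add_mul_diagonal_update C P (fun j => (N j : ℂ)) hi
  set d := (diagonal P + C * diagonal fun j => (N j : ℂ)).principalMinor (N.support.erase i)
  set R₀ := ∏ j ∈ N.support.erase i, rfactor (N j) (P j)
  have hupdate : ∀ s, rCoeff C (Function.update P i s) N =
      (s * d + N i * K) * (rfactor (N i) s * R₀) := fun s => by
    rw [rCoeff_update C P hi, ← hK, Function.update_eq_self]
  have hP : P - Pi.single i 1 = Function.update P i (P i - 1) := by
    ext j
    rcases eq_or_ne j i with rfl | hj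
    · simp
    · simp [hj]
  rw [hP, hupdate, ← Function.update_eq_self i P, hupdate, Function.update_eq_self]
  obtain ⟨l, hl⟩ := Nat.exists_eq_add_one.2 (Nat.pos_of_ne_zero hN)
  rcases l with _ | l
  · rw [rCoeff_sub_single_of_eq_one C P hl, hl]
    simp only [zero_add, rfactor_one]
    ring
  · have hK' := hK (P i) (l + 1 : ℕ)
    rw [Function.update_eq_self] at hK'
    rw [rCoeff_sub_single_of_eq_add_two C P hl, hK', hl]
    linear_combination R₀ * rfactor_recurrence l (P i) d K

theorem rCoeff_zero (C : Matrix H H ℂ) (P : H → ℂ) : rCoeff C P 0 = 1 := by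
  simp [rCoeff, principalMinor]

theorem rCoeff_neg_vecMul (C : Matrix H H ℂ) {N : H →₀ ℕ} (hN : N ≠ 0) :
    rCoeff C (-((fun j => (N j : ℂ)) ᵥ* C)) N = 0 := by
  rw [rCoeff, principalMinor_diagonal_neg_vecMul_add_mul_diagonal_eq_zero, zero_mul]
  · exact fun a ha => by simpa using ha
  · obtain ⟨a, ha⟩ := Finsupp.support_nonempty_iff.2 hN
    exact ⟨a, ha, by simpa using ha⟩

theorem rCoeff_mem_polyFun {ι : Type*} (C : Matrix H H ℂ) {P : (ι → ℂ) → H → ℂ}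
    (hP : ∀ j, (fun x => P x j) ∈ polyFun ℂ ι) (N : H →₀ ℕ) :
    (fun x => rCoeff C (P x) N) ∈ polyFun ℂ ι := by
  have hsplit : (fun x => rCoeff C (P x) N) =
      (fun x => (diagonal (P x) + C * diagonal fun j => (N j : ℂ)).principalMinor N.support) *
        ∏ j ∈ N.support, fun x => rfactor (N j) (P x j) := by
    ext x
    simp [rCoeff, Finset.prod_apply]
  rw [hsplit]
  refine Subalgebra.mul_mem _ (det_mem_polyFun fun a b => ?_)
    (Subalgebra.prod_mem _ fun j _ => rfactor_mem_polyFun (hP j) _)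
  simp only [submatrix_apply, Matrix.add_apply, diagonal_apply, mul_diagonal]
  refine Subalgebra.add_mem _ ?_ (const_mem_polyFun _)
  by_cases hab : (a : H) = b
  · simpa [hab] using hP b
  · simpa [hab] using const_mem_polyFun (ι := ι) (0 : ℂ)

end rCoeff

section Rfin

variable {H : Type*} [Fintype H] [DecidableEq H] {D G : Matrix H H ℂ}

theorem Pfin_eq_vecMul (ν : H → ℂ) (N : H →₀ ℕ) :
    Pfin D G ν N = -(ν ᵥ* D⁻¹) - (fun j => (N j : ℂ)) ᵥ* (G * D⁻¹) :=
  rfl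

theorem Pfin_add_row (hD : IsUnit D) (ν : H → ℂ) (N : H →₀ ℕ) (i : H) :
    Pfin D G (ν + D i) N = Pfin D G ν N - Pi.single i 1 := by
  have hrow : D i ᵥ* D⁻¹ = Pi.single i 1 := by
    rw [show D i = D.row i from rfl, ← single_one_vecMul, vecMul_vecMul,
      mul_nonsing_inv _ ((isUnit_iff_isUnit_det D).1 hD), vecMul_one]
  rw [Pfin_eq_vecMul, Pfin_eq_vecMul, add_vecMul, hrow]
  abel

theorem Pfin_add_row_sub_single (ν : H → ℂ) {N : H →₀ ℕ} {i : H} (hN : N i ≠ 0) :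
    Pfin D G (ν + G i) (N - Finsupp.single i 1) = Pfin D G ν N := by
  have hrow : G i ᵥ* D⁻¹ = Pi.single i 1 ᵥ* (G * D⁻¹) := by
    rw [← vecMul_vecMul, single_one_vecMul]
    rfl
  rw [Pfin_eq_vecMul, Pfin_eq_vecMul, add_vecMul, natCast_sub_single hN, sub_vecMul, hrow]
  abel

theorem coeff_Rfin (ν : H → ℂ) (N : H →₀ ℕ) :
    coeff N (Rfin D G ν) = rCoeff (G * D⁻¹) (Pfin D G ν N) N := by
  refine congrArg₂ (fun a b : ℂ => a * b) ?_ (Finset.prod_congr rfl fun j _ => rfl)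
  unfold principalMinor
  congr 1 with a b
  simp only [Ffin, of_apply, submatrix_apply, Matrix.add_apply, diagonal_apply, mul_diagonal]
  split_ifs with hab <;> simp only [hab]

theorem Rfin_add_row (hD : IsUnit D) (ν : H → ℂ) (i : H) :
    Rfin D G (ν + D i) = Rfin D G ν - X i * Rfin D G (ν + G i) := by
  ext N
  rw [map_sub, coeff_X_mul_eq_ite, coeff_Rfin, coeff_Rfin, Pfin_add_row hD]
  split_ifs with hN
  · rw [sub_zero]
    refine rCoeff_congr _ fun j hj => ?_
    have hji : j ≠ i := by rintro rfl; exact Finsupp.mem_support_iff.1 hj hN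
    rw [Pi.sub_apply, Pi.single_eq_of_ne hji, sub_zero]
  · rw [coeff_Rfin, Pfin_add_row_sub_single ν hN, rCoeff_sub_single_one _ _ hN]

theorem Rfin_zero : Rfin D G 0 = 1 := by
  ext N
  rw [coeff_Rfin, coeff_one]
  split_ifs with hN
  · rw [hN, rCoeff_zero]
  · rw [Pfin_eq_vecMul, zero_vecMul, neg_zero, zero_sub, rCoeff_neg_vecMul _ hN]

theorem Pfin_mem_polyFun (N : H →₀ ℕ) (j : H) : (fun ν => Pfin D G ν N j) ∈ polyFun ℂ H := by
  have hP : (fun ν => Pfin D G ν N j) = -(∑ k, (fun ν : H → ℂ => ν k) * fun _ => D⁻¹ k j) -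
      fun _ => ∑ k, (N k : ℂ) * (G * D⁻¹) k j := by
    ext ν
    simp [Pfin, Finset.sum_apply]
  rw [hP]
  exact Subalgebra.sub_mem _ (Subalgebra.neg_mem _ (Subalgebra.sum_mem _ fun k _ =>
    Subalgebra.mul_mem _ (coord_mem_polyFun k) (const_mem_polyFun _))) (const_mem_polyFun _)

theorem Rfin_mem_polyCoeffFamily : Rfin D G ∈ polyCoeffFamily ℂ H H := fun N => by
  simpa only [coeff_Rfin] using rCoeff_mem_polyFun _ (fun j => Pfin_mem_polyFun N j) N

end Rfin

/-- Let `(Q_i)` be the unique solution of the finite `Q`-system for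
matrices `D, G` with `det D ≠ 0`, and for `ν ∈ ℂ^H` set `Q^ν = ∏_i Q_i^{ν_i}`.
Then `Q^ν_{D,G}(w) = R^ν_{D,G}(w)`. -/
theorem statement3 {H : Type*} [Fintype H] [DecidableEq H]
    (D G : Matrix H H ℂ) (hD : D.det ≠ 0)
    (Q : H → MvPowerSeries H ℂ)
    (hQ1 : ∀ i, MvPowerSeries.constantCoeff (Q i) = 1)
    (hQ2 : ∀ i, (∏ j, cpow (Q j) (D i j)) +
      MvPowerSeries.X i * ∏ j, cpow (Q j) (G i j) = 1)
    (ν : H → ℂ) :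
    (∏ i, cpow (Q i) (ν i)) = Rfin D G ν := by
  have hDunit : IsUnit D := (isUnit_iff_isUnit_det D).2 hD.isUnit
  have hQrec : ∀ μ i, ∏ j, cpow (Q j) ((μ + D i) j) =
      ∏ j, cpow (Q j) (μ j) - X i * ∏ j, cpow (Q j) ((μ + G i) j) := fun μ i => by
    rw [prod_cpow_add hQ1, prod_cpow_add hQ1, eq_sub_of_add_eq (hQ2 i)]
    ring
  have hQ0 : ∏ j, cpow (Q j) ((0 : H → ℂ) j) = 1 :=
    Finset.prod_eq_one fun j _ => cpow_zero (hQ1 j)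
  have hQpoly : (fun μ : H → ℂ => ∏ j, cpow (Q j) (μ j)) ∈ polyCoeffFamily ℂ H H := by
    simpa [Finset.prod_fn] using
      Subalgebra.prod_mem _ fun j _ => cpow_mem_polyCoeffFamily (Q j) j
  exact congrFun (eq_of_shift_recurrence hDunit hQpoly Rfin_mem_polyCoeffFamily
    (hQ0.trans Rfin_zero.symm) hQrec (Rfin_add_row hDunit)) ν
end

section
/- Let H be a countably infinite index set with an increasing sequence H_1 ⊂ H_2 ⊂ ⋯ of finite subsets whose union is H, and let G = (G_{ij})_{i,j∈H} be any complex matrix. Then there exists a unique family (Q_i(w))_{i∈H} of formal power series in w = (w_i)_{i∈H} with unit constant terms satisfying the standard infinite Q-system Q_i(w) + w_i ∏_{j∈H} (Q_j(w))^{G_{ij}} = 1 for all i ∈ H. Moreover, its L-th projections Q_{i,L}(w_L) = p_L(Q_i(w)) are characterized by: Q_{i,L}(w_L) = 1 for i ∉ H_L, and Q_{i,L}(w_L) + w_i ∏_{j∈H_L} (Q_{j,L}(w_L))^{G_{ij}} = 1 for i ∈ H_L. -/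
/-- `HasProdPS f P`: the (possibly infinite) product of the family `f` converges to `P`
in the projective-limit topology on formal power series, i.e. every coefficient of the
finite partial products eventually stabilizes at the corresponding coefficient of `P`,
irrespective of the order of the product. -/
def HasProdPS {ι σ : Type*} (f : ι → MvPowerSeries σ ℂ) (P : MvPowerSeries σ ℂ) : Prop :=
  ∀ N : σ →₀ ℕ, ∃ s : Finset ι, ∀ t : Finset ι, s ⊆ t →
    MvPowerSeries.coeff N (∏ j ∈ t, f j) = MvPowerSeries.coeff N P

/-- A family `(Q_i)` with unit constant terms is a solution of the standard infinite
`Q`-system `Q_i + w_i ∏_j Q_j^{G_{ij}} = 1` (the infinite products being required to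
converge). -/
def InfStdSys {H : Type*} (G : H → H → ℂ) (Q : H → MvPowerSeries H ℂ) : Prop :=
  (∀ i, MvPowerSeries.constantCoeff (Q i) = 1) ∧
  ∀ i, ∃ P, HasProdPS (fun j => cpow (Q j) (G i j)) P ∧
    Q i + MvPowerSeries.X i * P = 1

/-- A family `(Q_i)` with unit constant terms is a solution of the infinite `Q`-system
`∏_j Q_j^{D_{ij}} + w_i ∏_j Q_j^{G_{ij}} = 1` (the infinite products being required to
converge). -/
def InfSys {H : Type*} (D G : H → H → ℂ) (Q : H → MvPowerSeries H ℂ) : Prop :=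
  (∀ i, MvPowerSeries.constantCoeff (Q i) = 1) ∧
  ∀ i, ∃ P₁ P₂, HasProdPS (fun j => cpow (Q j) (D i j)) P₁ ∧
    HasProdPS (fun j => cpow (Q j) (G i j)) P₂ ∧
    P₁ + MvPowerSeries.X i * P₂ = 1

/-- The inversion property of a solution: for each `i`, the iterated infinite product
`∏_j (∏_k Q_k^{(D⁻¹)_{ij} D_{jk}})` exists and equals `Q_i`. -/
def IsCanonicalPS {ι σ : Type*} (Dinv D : ι → ι → ℂ) (Q : ι → MvPowerSeries σ ℂ) : Prop :=
  ∀ i, ∃ inner : ι → MvPowerSeries σ ℂ,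
    (∀ j, HasProdPS (fun k => cpow (Q k) (Dinv i j * D j k)) (inner j)) ∧
    HasProdPS inner (Q i)

/-- Condition (D): `Dinv` is a two-sided inverse of the infinite matrix `D`, all the sums
involved having finitely many nonzero terms. -/
def InvPair {H : Type*} [DecidableEq H] (D Dinv : H → H → ℂ) : Prop :=
  (∀ i k, ({j | D i j * Dinv j k ≠ 0} : Set H).Finite ∧
    ∑ᶠ j, D i j * Dinv j k = if i = k then (1 : ℂ) else 0) ∧
  (∀ i k, ({j | Dinv i j * D j k ≠ 0} : Set H).Finite ∧
    ∑ᶠ j, Dinv i j * D j k = if i = k then (1 : ℂ) else 0)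

/-- Condition (G'): the matrix product `G' = G · Dinv` is well-defined, i.e. for each
`i, k` all but finitely many `G_{ij} (D⁻¹)_{jk}` vanish, and its value is `G'`. -/
def MulDef {H : Type*} (G Dinv G' : H → H → ℂ) : Prop :=
  ∀ i k, ({j | G i j * Dinv j k ≠ 0} : Set H).Finite ∧
    ∑ᶠ j, G i j * Dinv j k = G' i k

/-- The projection `p_L : ℂ[[w]] → ℂ[[w_L]]` (realized as a self-map of `ℂ[[w]]`),
sending `w_i ↦ w_i` for `i ∈ s` and `w_i ↦ 0` otherwise. -/
noncomputable def projL {H : Type*} [DecidableEq H] (s : Finset H)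
    (f : MvPowerSeries H ℂ) : MvPowerSeries H ℂ :=
  fun N => if N.support ⊆ s then MvPowerSeries.coeff N f else 0

/-!
First solve the truncated systems. For a finite `s ⊆ H`, the system
`Q_i + w_i ∏_{j ∈ s} Q_j^{G_{ij}} = 1` for `i ∈ s`, `Q_i = 1` for `i ∉ s`, has exactly one
solution `Qfin G s`: because of the factor `w_i`, its right-hand side determines the coefficients
of total degree `d + 1` from those of degree `≤ d`, so it is a contraction for the `w`-adic
filtration. Setting the variables outside `s` to zero sends solutions for `s' ⊇ s`, as well as
solutions of the infinite system, to solutions for `s`. Hence the `Qfin G s` form a compatible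
family, whose projective limit is the unique solution of the infinite system; its infinite
products converge because `p_s(Q_j) = 1` for `j ∉ s`.
-/

open MvPowerSeries Finset Function

noncomputable section

namespace QSystem

section Contraction

variable {σ ι R : Type*} [CommSemiring R]

def EqBelowDeg (d : ℕ) (f g : MvPowerSeries σ R) : Prop :=
  ∀ N : σ →₀ ℕ, N.degree < d → coeff N f = coeff N g

namespace EqBelowDeg

variable {d : ℕ} {f f' g g' : MvPowerSeries σ R}

lemma refl (d : ℕ) (f : MvPowerSeries σ R) : EqBelowDeg d f f := fun _ _ => rfl

lemma mul (hf : EqBelowDeg d f f') (hg : EqBelowDeg d g g') : EqBelowDeg d (f * g) (f' * g') := by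
  classical
  intro N hN
  rw [coeff_mul, coeff_mul]
  refine sum_congr rfl fun p hp => ?_
  rw [HasAntidiagonal.mem_antidiagonal] at hp
  have h₁ : p.1.degree ≤ N.degree := Finsupp.degree_mono (hp ▸ le_self_add)
  have h₂ : p.2.degree ≤ N.degree := Finsupp.degree_mono (hp ▸ le_add_self)
  rw [hf _ (h₁.trans_lt hN), hg _ (h₂.trans_lt hN)]

lemma pow (h : EqBelowDeg d f g) (k : ℕ) : EqBelowDeg d (f ^ k) (g ^ k) := by
  induction k with
  | zero => exact refl d _
  | succ k ih => simpa only [pow_succ] using ih.mul h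

lemma prod {t : Finset ι} {F F' : ι → MvPowerSeries σ R}
    (h : ∀ j ∈ t, EqBelowDeg d (F j) (F' j)) :
    EqBelowDeg d (∏ j ∈ t, F j) (∏ j ∈ t, F' j) := by
  classical
  induction t using Finset.induction_on with
  | empty => exact refl d _
  | insert a t ha ih =>
    rw [prod_insert ha, prod_insert ha]
    exact (h a (mem_insert_self a t)).mul (ih fun j hj => h j (mem_insert_of_mem hj))

lemma monomial_mul (h : EqBelowDeg d f g) (n : σ →₀ ℕ) (a : R) :
    EqBelowDeg (d + n.degree) (monomial n a * f) (monomial n a * g) := by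
  intro N hN
  rw [coeff_monomial_mul, coeff_monomial_mul]
  split_ifs with hn
  · have := map_add Finsupp.degree (N - n) n
    rw [tsub_add_cancel_of_le hn] at this
    rw [h _ (by omega)]
  · rfl

lemma X_mul (h : EqBelowDeg d f g) (i : σ) : EqBelowDeg (d + 1) (X i * f) (X i * g) := by
  simpa only [X_def, Finsupp.degree_single] using h.monomial_mul (Finsupp.single i 1) 1

lemma sub {R : Type*} [CommRing R] {f f' g g' : MvPowerSeries σ R}
    (hf : EqBelowDeg d f f') (hg : EqBelowDeg d g g') : EqBelowDeg d (f - g) (f' - g') :=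
  fun N hN => by rw [map_sub, map_sub, hf N hN, hg N hN]

end EqBelowDeg

def IsContracting (F : (ι → MvPowerSeries σ R) → ι → MvPowerSeries σ R) : Prop :=
  ∀ d P Q, (∀ j, EqBelowDeg d (P j) (Q j)) → ∀ i, EqBelowDeg (d + 1) (F P i) (F Q i)

/-- The coefficient of degree `n` of the iterates `F^[m] 0` is constant for `m > n`. -/
def fixedPoint (F : (ι → MvPowerSeries σ R) → ι → MvPowerSeries σ R) :
    ι → MvPowerSeries σ R :=
  fun i N => coeff N (F^[N.degree + 1] 0 i)

namespace IsContracting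

variable {F : (ι → MvPowerSeries σ R) → ι → MvPowerSeries σ R}

lemma iterate (hF : IsContracting F) (n : ℕ) (P Q : ι → MvPowerSeries σ R) (i : ι) :
    EqBelowDeg n (F^[n] P i) (F^[n] Q i) := by
  induction n generalizing i with
  | zero => exact fun N hN => absurd hN (Nat.not_lt_zero _)
  | succ n ih =>
    rw [iterate_succ_apply', iterate_succ_apply']
    exact hF n _ _ ih i

lemma eqBelowDeg_fixedPoint (hF : IsContracting F) (n : ℕ) (i : ι) :
    EqBelowDeg n (fixedPoint F i) (F^[n] 0 i) := by
  intro N hN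
  obtain ⟨m, rfl⟩ : ∃ m, n = N.degree + 1 + m := ⟨n - (N.degree + 1), by omega⟩
  rw [iterate_add_apply]
  exact hF.iterate _ 0 _ i N (Nat.lt_succ_self _)

lemma isFixedPt_fixedPoint (hF : IsContracting F) : IsFixedPt F (fixedPoint F) := by
  funext i
  ext N
  have hstep := hF _ _ _ (hF.eqBelowDeg_fixedPoint N.degree) i N (Nat.lt_succ_self _)
  rw [hstep, ← iterate_succ_apply' F]
  exact (hF.eqBelowDeg_fixedPoint _ i N (Nat.lt_succ_self _)).symm

lemma eq_of_isFixedPt (hF : IsContracting F) {P Q : ι → MvPowerSeries σ R}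
    (hP : IsFixedPt F P) (hQ : IsFixedPt F Q) : P = Q := by
  have key : ∀ n i, EqBelowDeg n (P i) (Q i) := by
    intro n
    induction n with
    | zero => exact fun _ N hN => absurd hN (Nat.not_lt_zero _)
    | succ n ih =>
      intro i
      have := hF n P Q ih i
      rwa [hP.eq, hQ.eq] at this
  funext i
  ext N
  exact key _ i N (Nat.lt_succ_self _)

end IsContracting

end Contraction

section Cpow

variable {σ : Type*}

lemma coeff_cpow (f : MvPowerSeries σ ℂ) (α : ℂ) (N : σ →₀ ℕ) :
    coeff N (cpow f α) = ∑ k ∈ range (N.degree + 1), binomC α k * coeff N ((f - 1) ^ k) := rfl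

lemma one_cpow (α : ℂ) : cpow (1 : MvPowerSeries σ ℂ) α = 1 := by
  ext N
  rw [coeff_cpow, sub_self, sum_eq_single 0 (fun k _ hk => by rw [zero_pow hk, map_zero, mul_zero])
    (fun h => absurd (mem_range.2 (Nat.succ_pos _)) h)]
  simp [binomC]

lemma EqBelowDeg.cpow {d : ℕ} {f g : MvPowerSeries σ ℂ} (h : EqBelowDeg d f g) (α : ℂ) :
    EqBelowDeg d (cpow f α) (cpow g α) := by
  intro N hN
  rw [coeff_cpow, coeff_cpow]
  refine sum_congr rfl fun k _ => ?_
  rw [(h.sub (EqBelowDeg.refl d 1)).pow k N hN]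

end Cpow

section Projection

variable {H : Type*} [DecidableEq H]

lemma coeff_projL_of_subset {s : Finset H} {N : H →₀ ℕ} (h : N.support ⊆ s)
    (f : MvPowerSeries H ℂ) : coeff N (projL s f) = coeff N f := if_pos h

lemma coeff_projL_of_not_subset {s : Finset H} {N : H →₀ ℕ} (h : ¬N.support ⊆ s)
    (f : MvPowerSeries H ℂ) : coeff N (projL s f) = 0 := if_neg h

lemma ext_projL {f g : MvPowerSeries H ℂ}
    (h : ∀ N : H →₀ ℕ, ∃ s, N.support ⊆ s ∧ projL s f = projL s g) : f = g := by
  ext N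
  obtain ⟨s, hN, hs⟩ := h N
  rw [← coeff_projL_of_subset hN f, hs, coeff_projL_of_subset hN]

lemma projL_one (s : Finset H) : projL s (1 : MvPowerSeries H ℂ) = 1 := by
  ext N
  by_cases h : N.support ⊆ s
  · exact coeff_projL_of_subset h 1
  · rw [coeff_projL_of_not_subset h, coeff_one, if_neg]
    rintro rfl
    exact h (by simp)

lemma projL_add (s : Finset H) (f g : MvPowerSeries H ℂ) :
    projL s (f + g) = projL s f + projL s g := by
  ext N
  by_cases h : N.support ⊆ s
  · simp only [map_add, coeff_projL_of_subset h]
  · simp only [map_add, coeff_projL_of_not_subset h, add_zero]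

lemma projL_mul (s : Finset H) (f g : MvPowerSeries H ℂ) :
    projL s (f * g) = projL s f * projL s g := by
  ext N
  rw [coeff_mul]
  by_cases h : N.support ⊆ s
  · rw [coeff_projL_of_subset h, coeff_mul]
    refine sum_congr rfl fun p hp => ?_
    rw [HasAntidiagonal.mem_antidiagonal] at hp
    rw [coeff_projL_of_subset ((Finsupp.support_mono (hp ▸ le_self_add)).trans h),
      coeff_projL_of_subset ((Finsupp.support_mono (hp ▸ le_add_self)).trans h)]
  · rw [coeff_projL_of_not_subset h]
    refine (sum_eq_zero fun p hp => ?_).symm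
    rw [HasAntidiagonal.mem_antidiagonal] at hp
    by_cases h₁ : p.1.support ⊆ s
    · have h₂ : ¬p.2.support ⊆ s := fun h₂ =>
        h (hp ▸ Finsupp.support_add.trans (union_subset h₁ h₂))
      rw [coeff_projL_of_not_subset h₂, mul_zero]
    · rw [coeff_projL_of_not_subset h₁, zero_mul]

def projLHom (s : Finset H) : MvPowerSeries H ℂ →+* MvPowerSeries H ℂ :=
  RingHom.mk' ⟨⟨projL s, projL_one s⟩, projL_mul s⟩ (projL_add s)

@[simp]
lemma projLHom_apply (s : Finset H) (f : MvPowerSeries H ℂ) : projLHom s f = projL s f := rfl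

lemma projL_X_of_mem {s : Finset H} {i : H} (hi : i ∈ s) :
    projL s (X i : MvPowerSeries H ℂ) = X i := by
  ext N
  by_cases h : N.support ⊆ s
  · exact coeff_projL_of_subset h _
  · rw [coeff_projL_of_not_subset h, coeff_X, if_neg]
    rintro rfl
    exact h (Finsupp.support_single_subset.trans (singleton_subset_iff.2 hi))

lemma projL_X_of_notMem {s : Finset H} {i : H} (hi : i ∉ s) :
    projL s (X i : MvPowerSeries H ℂ) = 0 := by
  ext N
  by_cases h : N.support ⊆ s
  · rw [coeff_projL_of_subset h, coeff_X, map_zero, if_neg]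
    rintro rfl
    exact hi (h (by simp))
  · rw [coeff_projL_of_not_subset h, map_zero]

lemma projL_cpow (s : Finset H) (f : MvPowerSeries H ℂ) (α : ℂ) :
    projL s (cpow f α) = cpow (projL s f) α := by
  ext N
  have hpow (k : ℕ) : (projL s f - 1) ^ k = projL s ((f - 1) ^ k) := by
    simp only [← projLHom_apply, map_pow, map_sub, map_one]
  rw [coeff_cpow]
  by_cases h : N.support ⊆ s
  · simp only [coeff_projL_of_subset h, coeff_cpow, hpow]
  · simp only [coeff_projL_of_not_subset h, hpow, mul_zero, sum_const_zero]

lemma projL_eq_one_of_add_X_mul_eq_one {s : Finset H} {i : H} {q p : MvPowerSeries H ℂ}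
    (hi : i ∉ s) (h : q + X i * p = 1) : projL s q = 1 := by
  have hs := congrArg (projLHom s) h
  rw [map_add, map_mul, map_one] at hs
  simpa only [projLHom_apply, projL_X_of_notMem hi, zero_mul, add_zero] using hs

/-- The projective limit of a compatible family `(g s)_s`, see `projL_limProj`. -/
def limProj (g : Finset H → MvPowerSeries H ℂ) : MvPowerSeries H ℂ :=
  fun N => coeff N (g N.support)

lemma projL_limProj {g : Finset H → MvPowerSeries H ℂ}
    (hg : ∀ s t, s ⊆ t → projL s (g t) = g s) (s : Finset H) : projL s (limProj g) = g s := by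
  ext N
  by_cases h : N.support ⊆ s
  · rw [coeff_projL_of_subset h]
    show coeff N (g N.support) = _
    rw [← hg _ s h, coeff_projL_of_subset subset_rfl]
  · rw [coeff_projL_of_not_subset h, ← hg s s subset_rfl, coeff_projL_of_not_subset h]

end Projection

section InfiniteProduct

lemma hasProdPS_finsetProd {ι σ : Type*} {f : ι → MvPowerSeries σ ℂ} {t : Finset ι}
    (h : ∀ j ∉ t, f j = 1) : HasProdPS f (∏ j ∈ t, f j) :=
  fun _ => ⟨t, fun _ ht => by rw [prod_subset ht fun j _ hj => h j hj]⟩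

variable {H : Type*} [DecidableEq H] {s : Finset H} {f : H → MvPowerSeries H ℂ}

lemma projL_prod_of_subset {t : Finset H} (hst : s ⊆ t) (h : ∀ j ∉ s, projL s (f j) = 1) :
    projL s (∏ j ∈ t, f j) = projL s (∏ j ∈ s, f j) := by
  simp only [← projLHom_apply, map_prod]
  exact (prod_subset hst fun j _ hj => h j hj).symm

lemma projL_of_hasProdPS {P : MvPowerSeries H ℂ} (hP : HasProdPS f P)
    (h : ∀ j ∉ s, projL s (f j) = 1) : projL s P = projL s (∏ j ∈ s, f j) := by
  ext N
  by_cases hN : N.support ⊆ s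
  · obtain ⟨u, hu⟩ := hP N
    rw [coeff_projL_of_subset hN, ← hu _ subset_union_left, ← coeff_projL_of_subset hN,
      projL_prod_of_subset subset_union_right h]
  · rw [coeff_projL_of_not_subset hN, coeff_projL_of_not_subset hN]

lemma exists_hasProdPS (h : ∀ s : Finset H, ∀ j ∉ s, projL s (f j) = 1) :
    ∃ P, HasProdPS f P := by
  refine ⟨fun N => coeff N (∏ j ∈ N.support, f j), fun N => ⟨N.support, fun t ht => ?_⟩⟩
  rw [← coeff_projL_of_subset subset_rfl, projL_prod_of_subset ht (h _),
    coeff_projL_of_subset subset_rfl]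
  rfl

end InfiniteProduct

section FiniteSystem

variable {H : Type*} [DecidableEq H] (G : H → H → ℂ) (s : Finset H)

def IsFinSol (R : H → MvPowerSeries H ℂ) : Prop :=
  (∀ i ∉ s, R i = 1) ∧ ∀ i ∈ s, R i + X i * ∏ j ∈ s, cpow (R j) (G i j) = 1

def finStep (R : H → MvPowerSeries H ℂ) (i : H) : MvPowerSeries H ℂ :=
  if i ∈ s then 1 - X i * ∏ j ∈ s, cpow (R j) (G i j) else 1

lemma isContracting_finStep : IsContracting (finStep G s) := by
  intro d P Q h i
  unfold finStep
  split_ifs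
  · exact (EqBelowDeg.refl _ 1).sub
      ((EqBelowDeg.prod fun j _ => (h j).cpow (G i j)).X_mul i)
  · exact EqBelowDeg.refl _ 1

lemma isFinSol_iff_isFixedPt {R : H → MvPowerSeries H ℂ} :
    IsFinSol G s R ↔ IsFixedPt (finStep G s) R := by
  constructor
  · rintro ⟨hout, hin⟩
    funext i
    unfold finStep
    split_ifs with hi
    · exact eq_sub_of_add_eq (hin i hi) |>.symm
    · exact (hout i hi).symm
  · intro hR
    refine ⟨fun i hi => ?_, fun i hi => ?_⟩
    · simpa [finStep, hi] using (congrFun hR i).symm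
    · have hRi : 1 - X i * ∏ j ∈ s, cpow (R j) (G i j) = R i := by
        simpa [finStep, hi] using congrFun hR i
      rw [← hRi, sub_add_cancel]

def Qfin : H → MvPowerSeries H ℂ := fixedPoint (finStep G s)

lemma isFinSol_iff_eq_qfin {R : H → MvPowerSeries H ℂ} : IsFinSol G s R ↔ R = Qfin G s := by
  have hfix := (isContracting_finStep G s).isFixedPt_fixedPoint
  rw [isFinSol_iff_isFixedPt]
  exact ⟨fun h => (isContracting_finStep G s).eq_of_isFixedPt h hfix, fun h => h ▸ hfix⟩

lemma isFinSol_qfin : IsFinSol G s (Qfin G s) := (isFinSol_iff_eq_qfin G s).2 rfl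

lemma qfin_of_notMem {i : H} (hi : i ∉ s) : Qfin G s i = 1 := (isFinSol_qfin G s).1 i hi

variable {G s}

lemma projL_add_X_mul_of_hasProdPS {Q : H → MvPowerSeries H ℂ} {i : H} {P : MvPowerSeries H ℂ}
    (hP : HasProdPS (fun j => cpow (Q j) (G i j)) P) (hout : ∀ j ∉ s, projL s (Q j) = 1)
    (hi : i ∈ s) :
    projL s (Q i + X i * P) = projL s (Q i) + X i * ∏ j ∈ s, cpow (projL s (Q j)) (G i j) := by
  have hP' := projL_of_hasProdPS hP fun j hj => by rw [projL_cpow, hout j hj, one_cpow]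
  simp only [← projLHom_apply, map_add, map_mul, map_prod] at hP' ⊢
  simp only [hP', projLHom_apply, projL_X_of_mem hi, projL_cpow]

lemma isFinSol_projL {Q : H → MvPowerSeries H ℂ} (hout : ∀ i ∉ s, projL s (Q i) = 1)
    (hin : ∀ i ∈ s, ∃ P, HasProdPS (fun j => cpow (Q j) (G i j)) P ∧ Q i + X i * P = 1) :
    IsFinSol G s (fun i => projL s (Q i)) := by
  refine ⟨hout, fun i hi => ?_⟩
  obtain ⟨P, hP, hQP⟩ := hin i hi
  rw [← projL_add_X_mul_of_hasProdPS hP hout hi, hQP, projL_one]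

lemma projL_qfin {t : Finset H} (hst : s ⊆ t) (i : H) : projL s (Qfin G t i) = Qfin G s i := by
  obtain ⟨ht_out, ht_in⟩ := isFinSol_qfin G t
  have hout : ∀ j ∉ s, projL s (Qfin G t j) = 1 := fun j hj => by
    by_cases hjt : j ∈ t
    · exact projL_eq_one_of_add_X_mul_eq_one hj (ht_in j hjt)
    · rw [ht_out j hjt, projL_one]
  have hsol := isFinSol_projL hout fun i hi =>
    ⟨_, hasProdPS_finsetProd fun j hj => by rw [ht_out j hj, one_cpow], ht_in i (hst hi)⟩
  exact congrFun ((isFinSol_iff_eq_qfin G s).1 hsol) i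

end FiniteSystem

section InfiniteSystem

variable {H : Type*} [DecidableEq H] (G : H → H → ℂ)

def Qinf (i : H) : MvPowerSeries H ℂ := limProj fun s => Qfin G s i

lemma projL_qinf (s : Finset H) (i : H) : projL s (Qinf G i) = Qfin G s i :=
  projL_limProj (fun _ _ h => projL_qfin h i) s

lemma infStdSys_qinf : InfStdSys G (Qinf G) := by
  refine ⟨fun i => ?_, fun i => ?_⟩
  · rw [← coeff_zero_eq_constantCoeff_apply, ← coeff_projL_of_subset (s := ∅) (by simp),
      projL_qinf, qfin_of_notMem G ∅ (notMem_empty i), coeff_one, if_pos rfl]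
  have hout (s : Finset H) : ∀ j ∉ s, projL s (Qinf G j) = 1 := fun j hj => by
    rw [projL_qinf, qfin_of_notMem G s hj]
  obtain ⟨P, hP⟩ := exists_hasProdPS (f := fun j => cpow (Qinf G j) (G i j))
    fun s j hj => by rw [projL_cpow, hout s j hj, one_cpow]
  refine ⟨P, hP, ext_projL fun N => ⟨insert i N.support, subset_insert _ _, ?_⟩⟩
  rw [projL_add_X_mul_of_hasProdPS hP (hout _) (mem_insert_self _ _), projL_one]
  simpa only [projL_qinf] using (isFinSol_qfin G _).2 i (mem_insert_self _ _)

variable {G}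

lemma isFinSol_projL_of_infStdSys {Q : H → MvPowerSeries H ℂ} (hQ : InfStdSys G Q)
    (s : Finset H) : IsFinSol G s (fun i => projL s (Q i)) :=
  isFinSol_projL (fun j hj => by
      obtain ⟨_, _, hQj⟩ := hQ.2 j
      exact projL_eq_one_of_add_X_mul_eq_one hj hQj)
    fun i _ => hQ.2 i

lemma eq_qinf_of_isFinSol_projL {Q : H → MvPowerSeries H ℂ}
    (h : ∀ N : H →₀ ℕ, ∃ s, N.support ⊆ s ∧ IsFinSol G s (fun i => projL s (Q i))) :
    Q = Qinf G := by
  funext i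
  refine ext_projL fun N => ?_
  obtain ⟨s, hN, hs⟩ := h N
  exact ⟨s, hN, by rw [projL_qinf]; exact congrFun ((isFinSol_iff_eq_qfin G s).1 hs) i⟩

end InfiniteSystem

lemma exists_subset_of_monotone {α : Type*} {S : ℕ → Finset α} (hmono : Monotone S)
    (hcover : ∀ a, ∃ n, a ∈ S n) (u : Finset α) : ∃ n, u ⊆ S n := by
  have hdir : Directed (· ⊆ ·) fun n => (S n : Set α) := fun m n =>
    ⟨max m n, coe_subset.2 (hmono (le_max_left m n)), coe_subset.2 (hmono (le_max_right m n))⟩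
  obtain ⟨n, hn⟩ := hdir.exists_mem_subset_of_finset_subset_biUnion (s := u)
    fun a _ => Set.mem_iUnion.2 (hcover a)
  exact ⟨n, coe_subset.1 hn⟩

end QSystem

end

open QSystem

theorem statement10_general {H : Type*} [DecidableEq H]
    (HL : ℕ → Finset H) (hmono : Monotone HL) (hcover : ∀ i : H, ∃ L, i ∈ HL L)
    (G : H → H → ℂ) :
    (∃! Q : H → MvPowerSeries H ℂ, InfStdSys G Q) ∧
    (∀ Q : H → MvPowerSeries H ℂ,
      (∀ i, MvPowerSeries.constantCoeff (Q i) = 1) →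
      (InfStdSys G Q ↔
        ((∀ L, ∀ i ∉ HL L, projL (HL L) (Q i) = 1) ∧
         (∀ L, ∀ i ∈ HL L,
            projL (HL L) (Q i) +
              MvPowerSeries.X i * ∏ j ∈ HL L, cpow (projL (HL L) (Q j)) (G i j) = 1)))) := by
  refine ⟨⟨Qinf G, infStdSys_qinf G, fun Q hQ => eq_qinf_of_isFinSol_projL fun N =>
      ⟨N.support, subset_rfl, isFinSol_projL_of_infStdSys hQ _⟩⟩,
    fun Q _ => ⟨fun hQ => ?_, ?_⟩⟩
  · exact forall_and.1 fun L => isFinSol_projL_of_infStdSys hQ (HL L)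
  · rintro ⟨hout, hin⟩
    have hQ : Q = Qinf G := eq_qinf_of_isFinSol_projL fun N =>
      let ⟨L, hL⟩ := exists_subset_of_monotone hmono hcover N.support
      ⟨HL L, hL, hout L, hin L⟩
    exact hQ ▸ infStdSys_qinf G

/-- For a countably infinite index set `H` (with an exhausting
increasing sequence of finite subsets `H_L`) and any complex matrix `G`, the standard
infinite `Q`-system has a unique solution with unit constant terms; moreover, for a
family with unit constant terms, being a solution is characterized by the conditions on
the projections: `p_L(Q_i) = 1` for `i ∉ H_L`, and
`p_L(Q_i) + w_i ∏_{j∈H_L} p_L(Q_j)^{G_{ij}} = 1` for `i ∈ H_L`. -/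
theorem statement10 {H : Type*} [Countable H] [Infinite H] [DecidableEq H]
    (HL : ℕ → Finset H) (hmono : Monotone HL) (hcover : ∀ i : H, ∃ L, i ∈ HL L)
    (G : H → H → ℂ) :
    (∃! Q : H → MvPowerSeries H ℂ, InfStdSys G Q) ∧
    (∀ Q : H → MvPowerSeries H ℂ,
      (∀ i, MvPowerSeries.constantCoeff (Q i) = 1) →
      (InfStdSys G Q ↔
        ((∀ L, ∀ i ∉ HL L, projL (HL L) (Q i) = 1) ∧
         (∀ L, ∀ i ∈ HL L,
            projL (HL L) (Q i) +
              MvPowerSeries.X i * ∏ j ∈ HL L, cpow (projL (HL L) (Q j)) (G i j) = 1)))) :=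
  statement10_general HL hmono hcover G
end
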